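/- The 23 condensed configurations defining the present-color constraint ℰ_p form a maximal-complete collection: every maximal triple (S₁,S₂,S₃) of nonempty subsets of Λ_p satisfying the universal quantifier with respect to ℰ_p equals, up to permutation of the three components, one of these 23 condensed configurations viewed as a triple of sets. -/

import Mathlib

/-- A two-bit label: the first component is the input bit, the second the output bit. -/
abbrev TwoBit := Bool × Bool

def b00 : TwoBit := (false, false)
def b01 : TwoBit := (false, true)
def b10 : TwoBit := (true, false)
def b11 : TwoBit := (true, true)

/-- The 22 maximal bit triples. -/
def bitTriples : List (Fin 3 → Set TwoBit) :=
  [ ![{b00, b10, b11}, {b00}, {b00}],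
    ![{b01, b10, b11}, {b00}, {b01}],
    ![{b00, b10, b11}, {b01}, {b01}],
    ![{b00, b01, b11}, {b00}, {b10}],
    ![{b00, b01, b10}, {b00}, {b11}],
    ![{b00, b01, b10}, {b01}, {b10}],
    ![{b00, b01, b11}, {b01}, {b11}],
    ![{b01, b10, b11}, {b10}, {b10}],
    ![{b00, b10, b11}, {b10}, {b11}],
    ![{b01, b10, b11}, {b11}, {b11}],
    ![{b00, b10}, {b00}, {b00, b11}],
    ![{b01, b11}, {b00}, {b01, b10}],
    ![{b00, b10}, {b01}, {b01, b10}],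
    ![{b01, b11}, {b00, b11}, {b01}],
    ![{b00, b10}, {b01, b11}, {b10}],
    ![{b11}, {b00, b10}, {b00, b10}],
    ![{b10}, {b01, b10}, {b01, b10}],
    ![{b10}, {b00, b11}, {b00, b11}],
    ![{b00, b11}, {b01, b10}, {b11}],
    ![{b11}, {b01, b11}, {b01, b11}],
    ![{b10, b11}, {b00, b01}, {b00, b01}],
    ![{b10, b11}, {b10, b11}, {b10, b11}] ]

/-- The ten present-color labels Λ_p = {EE, MM, MY0, MY1, XM0, XM1, XY00, XY01, XY10, XY11}. -/
inductive Lab where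
  | EE : Lab
  | MM : Lab
  | MY : Bool → Lab
  | XM : Bool → Lab
  | XY : Bool → Bool → Lab
deriving DecidableEq

open Lab

/-- Augmentation of a set of two-bit labels: replace each two-bit label `xy` by `XY x y`;
add `XM x` if both `XY x 0` and `XY x 1` are present; add `MY y` if both `XY 0 y` and
`XY 1 y` are present; and always add `MM`. -/
def aug (T : Set TwoBit) : Set Lab :=
  {MM} ∪ {l | ∃ x y, (x, y) ∈ T ∧ l = XY x y}
    ∪ {l | ∃ x, (x, false) ∈ T ∧ (x, true) ∈ T ∧ l = XM x}
    ∪ {l | ∃ y, (false, y) ∈ T ∧ (true, y) ∈ T ∧ l = MY y}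

/-- The 23 condensed configurations defining the present-color constraint. -/
def condP : List (Fin 3 → Set Lab) :=
  bitTriples.map (fun T => fun j => aug (T j)) ++ [![{MM}, Set.univ, Set.univ]]

/-- The present-color constraint ℰ_p: the family of size-3 multisets represented by the
23 condensed configurations. -/
def Ep : Set (Multiset Lab) :=
  {C | ∃ D ∈ condP, ∃ l₁ ∈ D 0, ∃ l₂ ∈ D 1, ∃ l₃ ∈ D 2,
    C = ({l₁, l₂, l₃} : Multiset Lab)}

/-- A triple of sets of labels satisfies the universal quantifier w.r.t. ℰ_p if every
choice of one label per component yields a multiset in ℰ_p. -/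
def EpUQ (S : Fin 3 → Set Lab) : Prop :=
  ∀ l₁ ∈ S 0, ∀ l₂ ∈ S 1, ∀ l₃ ∈ S 2, ({l₁, l₂, l₃} : Multiset Lab) ∈ Ep

/-!
If `S` is maximal, each component of `S` is exactly the set of labels compatible with the other
two components, that is, an intersection of sets `{a | {a, b, c} ∈ Ep}`. Every set of this form is
a component of one of the condensed configurations. Those 16 components form an
intersection-closed family, so every component of `S` is one of them. Hence `S` is determined by
its last two components, which leaves 16 × 16 candidates, and a kernel computation shows that
every candidate which is closed in all three coordinates is a permuted condensed configuration.
-/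

open Function Set

theorem Maximal.apply_eq_of_update_iff {ι α : Type*} [DecidableEq ι] {P : (ι → Set α) → Prop}
    {S : ι → Set α} (hS : Maximal P S) (j : ι) {F : Set α}
    (hF : ∀ T, P (update S j T) ↔ T ⊆ F) : S j = F := by
  have hSF : S j ⊆ F := (hF _).1 (by rw [update_eq_self]; exact hS.prop)
  have := hS.eq_of_le ((hF F).2 subset_rfl) (le_update_iff.2 ⟨hSF, fun _ _ => le_rfl⟩)
  simpa using congrFun this j

section Triples

variable {α : Type*}

theorem Multiset.triple_rotate (a b c : α) : ({a, b, c} : Multiset α) = {b, c, a} :=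
  Multiset.coe_eq_coe.2 (List.rotate_perm [a, b, c] 1).symm

theorem Multiset.exists_triple_eq_iff {X Y Z : Set α} {a b c : α} :
    (∃ x ∈ X, ∃ y ∈ Y, ∃ z ∈ Z, ({a, b, c} : Multiset α) = {x, y, z}) ↔
      a ∈ X ∧ (b ∈ Y ∧ c ∈ Z ∨ b ∈ Z ∧ c ∈ Y) ∨ a ∈ Y ∧ (b ∈ Z ∧ c ∈ X ∨ b ∈ X ∧ c ∈ Z) ∨
        a ∈ Z ∧ (b ∈ X ∧ c ∈ Y ∨ b ∈ Y ∧ c ∈ X) := by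
  have key (x y z : α) :
      ({a, b, c} : Multiset α) = {x, y, z} ↔ [x, y, z] ∈ [a, b, c].permutations' :=
    (List.mem_permutations'.trans (Multiset.coe_eq_coe.symm.trans eq_comm)).symm
  simp only [key]
  simp [List.permutations', List.permutations'Aux]
  aesop

def compatible (E : Set (Multiset α)) (B C : Set α) : Set α :=
  {a | ∀ b ∈ B, ∀ c ∈ C, {a, b, c} ∈ E}

theorem compatible_eq_inf [Fintype α] (E : Set (Multiset α)) (B C : Set α)
    [DecidablePred (· ∈ B)] [DecidablePred (· ∈ C)] :
    compatible E B C = (B.toFinset ×ˢ C.toFinset).inf fun p => {a | {a, p.1, p.2} ∈ E} := by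
  ext a
  simp [compatible, Finset.inf_eq_iInf]
  exact ⟨fun h b c hb hc => h b hb c hc, fun h b hb c hc => h b c hb hc⟩

end Triples

theorem Nat.testBit_foldr_or {β : Type*} (f : β → ℕ) (L : List β) (i : ℕ) :
    (L.foldr (fun x acc => f x ||| acc) 0).testBit i = L.any fun x => (f x).testBit i := by
  induction L with
  | nil => simp
  | cons x L ih => simp [ih]

theorem Nat.testBit_foldr_and {β : Type*} (f : β → ℕ) (L : List β) (init i : ℕ) :
    (L.foldr (fun x acc => f x &&& acc) init).testBit i =
      (init.testBit i && L.all fun x => (f x).testBit i) := by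
  induction L with
  | nil => simp
  | cons x L ih => simp [ih, Bool.and_left_comm]

namespace Lab

def idx : Lab → ℕ
  | EE => 0
  | MM => 1
  | MY y => 2 + y.toNat
  | XM x => 4 + x.toNat
  | XY x y => 6 + 2 * x.toNat + y.toNat

def all : List Lab :=
  [EE, MM, MY false, MY true, XM false, XM true, XY false false, XY false true, XY true false,
    XY true true]

theorem mem_all (l : Lab) : l ∈ all := by
  rcases l with _ | _ | ⟨_ | _⟩ | ⟨_ | _⟩ | ⟨_ | _, _ | _⟩ <;> decide

instance : Fintype Lab := ⟨⟨all, by decide⟩, mem_all⟩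

end Lab

def ofMask (m : ℕ) : Set Lab := {l | m.testBit l.idx}

instance (m : ℕ) : DecidablePred (· ∈ ofMask m) :=
  fun l => inferInstanceAs (Decidable (m.testBit l.idx = true))

theorem ofMask_eq_ofMask_iff {m m' : ℕ} :
    ofMask m = ofMask m' ↔ ∀ l : Lab, m.testBit l.idx = m'.testBit l.idx :=
  Set.ext_iff.trans (forall_congr' fun _ => Bool.eq_iff_iff.symm)

instance (m m' : ℕ) : Decidable (ofMask m = ofMask m') :=
  decidable_of_iff _ ofMask_eq_ofMask_iff.symm

theorem ofMask_and (m m' : ℕ) : ofMask (m &&& m') = ofMask m ∩ ofMask m' := by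
  ext l
  simp [ofMask]

theorem ofMask_univ : ofMask 0b1111111111 = univ := by
  ext l
  revert l
  decide

def iInterMask (m : ℕ) (f : Lab → ℕ) : ℕ :=
  (Lab.all.filter fun l => m.testBit l.idx).foldr (fun l acc => f l &&& acc) 0b1111111111

theorem ofMask_iInterMask (m : ℕ) (f : Lab → ℕ) :
    ofMask (iInterMask m f) = ⋂ l ∈ ofMask m, ofMask (f l) := by
  ext a
  have h : a ∈ ofMask 0b1111111111 := ofMask_univ ▸ mem_univ a
  simp only [iInterMask, ofMask, mem_ofPred_eq, Nat.testBit_foldr_and, List.all_eq_true,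
    List.mem_filter, mem_iInter, Bool.and_eq_true] at h ⊢
  exact ⟨fun H l hl => H.2 l ⟨Lab.mem_all l, hl⟩, fun H => ⟨h, fun l hl => H l hl.2⟩⟩

-- Read right to left, the bits of a mask stand for EE, MM, MY0, MY1, XM0, XM1, XY00, XY01, XY10,
-- XY11 (the order of `Lab.idx`).
def condMasks : List (Fin 3 → ℕ) :=
  [ ![0b1101100110, 0b0001000010, 0b0001000010],
    ![0b1110101010, 0b0001000010, 0b0010000010],
    ![0b1101100110, 0b0010000010, 0b0010000010],
    ![0b1011011010, 0b0001000010, 0b0100000010],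
    ![0b0111010110, 0b0001000010, 0b1000000010],
    ![0b0111010110, 0b0010000010, 0b0100000010],
    ![0b1011011010, 0b0010000010, 0b1000000010],
    ![0b1110101010, 0b0100000010, 0b0100000010],
    ![0b1101100110, 0b0100000010, 0b1000000010],
    ![0b1110101010, 0b1000000010, 0b1000000010],
    ![0b0101000110, 0b0001000010, 0b1001000010],
    ![0b1010001010, 0b0001000010, 0b0110000010],
    ![0b0101000110, 0b0010000010, 0b0110000010],
    ![0b1010001010, 0b1001000010, 0b0010000010],
    ![0b0101000110, 0b1010001010, 0b0100000010],
    ![0b1000000010, 0b0101000110, 0b0101000110],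
    ![0b0100000010, 0b0110000010, 0b0110000010],
    ![0b0100000010, 0b1001000010, 0b1001000010],
    ![0b1001000010, 0b0110000010, 0b1000000010],
    ![0b1000000010, 0b1010001010, 0b1010001010],
    ![0b1100100010, 0b0011010010, 0b0011010010],
    ![0b1100100010, 0b1100100010, 0b1100100010],
    ![0b0000000010, 0b1111111111, 0b1111111111] ]

instance (T : Set TwoBit) [DecidablePred (· ∈ T)] : DecidablePred (· ∈ aug T) := fun l => by
  unfold aug
  infer_instance

theorem condP_eq_map_ofMask : condP = condMasks.map fun M j => ofMask (M j) := by
  simp only [condP, bitTriples, condMasks, List.map_cons, List.map_nil, List.cons_append,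
    List.nil_append, List.cons.injEq, and_true]
  and_intros <;>
  · funext j
    fin_cases j <;> simp only [Fin.zero_eta, Fin.mk_one, Fin.reduceFinMk, Matrix.cons_val] <;>
      ext l <;> revert l <;> decide

def components : List ℕ := (condMasks.flatMap fun M => [M 0, M 1, M 2]).dedup

theorem and_mem_components : ∀ m ∈ components, ∀ m' ∈ components, m &&& m' ∈ components := by
  decide +kernel

def pairMem (y z : ℕ) (b c : Lab) : Bool :=
  y.testBit b.idx && z.testBit c.idx || z.testBit b.idx && y.testBit c.idx

def thirdMask (M : Fin 3 → ℕ) (b c : Lab) : ℕ :=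
  (bif pairMem (M 1) (M 2) b c then M 0 else 0) |||
    (bif pairMem (M 2) (M 0) b c then M 1 else 0) |||
    (bif pairMem (M 0) (M 1) b c then M 2 else 0)

theorem mem_ofMask_thirdMask {M : Fin 3 → ℕ} {a b c : Lab} :
    a ∈ ofMask (thirdMask M b c) ↔
      a ∈ ofMask (M 0) ∧
          (b ∈ ofMask (M 1) ∧ c ∈ ofMask (M 2) ∨ b ∈ ofMask (M 2) ∧ c ∈ ofMask (M 1)) ∨
        a ∈ ofMask (M 1) ∧
          (b ∈ ofMask (M 2) ∧ c ∈ ofMask (M 0) ∨ b ∈ ofMask (M 0) ∧ c ∈ ofMask (M 2)) ∨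
        a ∈ ofMask (M 2) ∧
          (b ∈ ofMask (M 0) ∧ c ∈ ofMask (M 1) ∨ b ∈ ofMask (M 1) ∧ c ∈ ofMask (M 0)) := by
  simp only [ofMask, mem_ofPred_eq, thirdMask, pairMem, Nat.testBit_or,
    Bool.apply_cond (Nat.testBit · a.idx), Nat.zero_testBit, Bool.cond_false_right,
    Bool.or_eq_true, Bool.and_eq_true]
  tauto

theorem mem_Ep_iff {a b c : Lab} :
    {a, b, c} ∈ Ep ↔ ∃ M ∈ condMasks, a ∈ ofMask (thirdMask M b c) := by
  simp only [Ep, condP_eq_map_ofMask, List.mem_map, exists_exists_and_eq_and, mem_ofPred_eq,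
    Multiset.exists_triple_eq_iff, mem_ofMask_thirdMask]

def allowMask (b c : Lab) : ℕ := condMasks.foldr (fun M acc => thirdMask M b c ||| acc) 0

theorem ofMask_allowMask (b c : Lab) : ofMask (allowMask b c) = {a | {a, b, c} ∈ Ep} := by
  ext a
  simp only [allowMask, mem_Ep_iff, ofMask, mem_ofPred_eq, Nat.testBit_foldr_or,
    List.any_eq_true]

theorem allowMask_mem_components : ∀ b c : Lab, allowMask b c ∈ components := by
  decide +kernel

theorem epUQ_update_iff (S : Fin 3 → Set Lab) (j : Fin 3) (T : Set Lab) :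
    EpUQ (update S j T) ↔ T ⊆ compatible Ep (S (j + 1)) (S (j + 2)) := by
  fin_cases j
  · rfl
  · simp [EpUQ, compatible, subset_def, -Multiset.insert_eq_cons]
    refine ⟨fun h x hx b hb c hc => ?_, fun h l₁ h₁ l₂ h₂ l₃ h₃ => ?_⟩
    · rw [← Multiset.triple_rotate]; exact h c hc x hx b hb
    · rw [Multiset.triple_rotate]; exact h l₂ h₂ l₃ h₃ l₁ h₁
  · simp [EpUQ, compatible, subset_def, -Multiset.insert_eq_cons]
    refine ⟨fun h x hx b hb c hc => ?_, fun h l₁ h₁ l₂ h₂ l₃ h₃ => ?_⟩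
    · rw [Multiset.triple_rotate]; exact h b hb c hc x hx
    · rw [← Multiset.triple_rotate]; exact h l₃ h₃ l₁ h₁ l₂ h₂

theorem exists_mem_components_ofMask_eq_compatible (B C : Set Lab) :
    ∃ m ∈ components, ofMask m = compatible Ep B C := by
  classical
  rw [compatible_eq_inf]
  refine Finset.inf_mem {s | ∃ m ∈ components, ofMask m = s}
    ⟨0b1111111111, by decide, ofMask_univ⟩ ?_ _ _ ?_
  · rintro _ ⟨m, hm, rfl⟩ _ ⟨m', hm', rfl⟩
    exact ⟨m &&& m', and_mem_components m hm m' hm', ofMask_and m m'⟩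
  · rintro ⟨b, c⟩ -
    exact ⟨allowMask b c, allowMask_mem_components b c, ofMask_allowMask b c⟩

-- Intersecting row by row lets the kernel evaluate each row `iInterMask m₂ (allowMask b ·)` once
-- and reuse it throughout `closed_triple_eq_condMask_perm`.
def compatibleMask (m₁ m₂ : ℕ) : ℕ :=
  iInterMask m₁ fun b => iInterMask m₂ fun c => allowMask b c

theorem ofMask_compatibleMask (m₁ m₂ : ℕ) :
    ofMask (compatibleMask m₁ m₂) = compatible Ep (ofMask m₁) (ofMask m₂) := by
  ext a
  simp only [compatibleMask, ofMask_iInterMask, ofMask_allowMask, mem_iInter, compatible,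
    mem_ofPred_eq]

theorem closed_triple_eq_condMask_perm : ∀ m₁ ∈ components, ∀ m₂ ∈ components,
    ofMask m₁ = ofMask (compatibleMask m₂ (compatibleMask m₁ m₂)) →
    ofMask m₂ = ofMask (compatibleMask (compatibleMask m₁ m₂) m₁) →
    ∃ M ∈ condMasks, ∃ σ : Equiv.Perm (Fin 3),
      ∀ j, ![compatibleMask m₁ m₂, m₁, m₂] (σ j) = M j := by
  decide +kernel

theorem present_color_maximal_complete_general (S : Fin 3 → Set Lab)
    (hUQ : EpUQ S)
    (hmax : ¬ ∃ S' : Fin 3 → Set Lab,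
        EpUQ S' ∧ (∀ j, S j ⊆ S' j) ∧ (∃ j, S j ⊂ S' j)) :
    ∃ ρ : Equiv.Perm (Fin 3), ∃ D ∈ condP, ∀ j, S (ρ j) = D j := by
  have hS : Maximal EpUQ S :=
    maximal_iff_forall_gt.2 ⟨hUQ, fun S' hlt hS' => hmax ⟨S', hS', Pi.lt_def.1 hlt⟩⟩
  have hclosed (j : Fin 3) : S j = compatible Ep (S (j + 1)) (S (j + 2)) :=
    hS.apply_eq_of_update_iff j (epUQ_update_iff S j)
  obtain ⟨m₁, hm₁, h₁⟩ := exists_mem_components_ofMask_eq_compatible (S 2) (S 0)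
  obtain ⟨m₂, hm₂, h₂⟩ := exists_mem_components_ofMask_eq_compatible (S 0) (S 1)
  set m₀ := compatibleMask m₁ m₂
  have hS₁ : S 1 = ofMask m₁ := (hclosed 1).trans h₁.symm
  have hS₂ : S 2 = ofMask m₂ := (hclosed 2).trans h₂.symm
  have hS₀ : S 0 = ofMask m₀ := by rw [ofMask_compatibleMask, ← hS₁, ← hS₂]; exact hclosed 0
  obtain ⟨M, hM, σ, hσ⟩ := closed_triple_eq_condMask_perm m₁ hm₁ m₂ hm₂
    (by rw [ofMask_compatibleMask, ← hS₀, ← hS₂, ← hS₁]; exact hclosed 1)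
    (by rw [ofMask_compatibleMask, ← hS₀, ← hS₁, ← hS₂]; exact hclosed 2)
  have hSM (j : Fin 3) : S j = ofMask (![m₀, m₁, m₂] j) := by fin_cases j <;> assumption
  refine ⟨σ, fun j => ofMask (M j), condP_eq_map_ofMask ▸ List.mem_map_of_mem hM, fun j => ?_⟩
  rw [hSM, hσ]

/-- **The 23 condensed configurations defining ℰ_p form a maximal-complete collection**:
every maximal triple of nonempty subsets of Λ_p satisfying the universal quantifier
w.r.t. ℰ_p equals, up to permutation of the three components, one of the 23 condensed
configurations viewed as a triple of sets. -/
theorem present_color_maximal_complete (S : Fin 3 → Set Lab)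
    (hne : ∀ j, (S j).Nonempty)
    (hUQ : EpUQ S)
    (hmax : ¬ ∃ S' : Fin 3 → Set Lab,
        EpUQ S' ∧ (∀ j, S j ⊆ S' j) ∧ (∃ j, S j ⊂ S' j)) :
    ∃ ρ : Equiv.Perm (Fin 3), ∃ D ∈ condP, ∀ j, S (ρ j) = D j :=
  present_color_maximal_complete_general S hUQ hmax
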